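/- For any T₀ space X, a subset U ⊆ X is SI₂-open if and only if for every net (x_i) and every x ∈ U with (x_i) GSI₂-converging to x, x_i ∈ U eventually. That is, the topology induced by GSI₂-convergence coincides with the SI₂-topology. -/

import Mathlib

open Set

/-- Specialization order: `x ≤ y` iff `x ∈ cl {y}`. -/
def specLE {X : Type} [TopologicalSpace X] (x y : X) : Prop := x ∈ closure {y}

/-- Upward closure w.r.t. the specialization order. -/
def upClosure {X : Type} [TopologicalSpace X] (A : Set X) : Set X :=
  {y | ∃ a ∈ A, specLE a y}

/-- The underlying set of the Smyth power space: nonempty compact saturated subsets. -/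
def SmythPS (X : Type) [TopologicalSpace X] : Type :=
  {K : Set X // K.Nonempty ∧ IsCompact K ∧ ∀ x ∈ K, ∀ y, specLE x y → y ∈ K}

/-- `□U = {K ∈ Q(X) : K ⊆ U}`. -/
def boxU {X : Type} [TopologicalSpace X] (U : Set X) : Set (SmythPS X) :=
  {K : SmythPS X | K.1 ⊆ U}

/-- The upper Vietoris topology on the Smyth power space. -/
instance smythTop (X : Type) [TopologicalSpace X] : TopologicalSpace (SmythPS X) :=
  TopologicalSpace.generateFrom {S : Set (SmythPS X) | ∃ U : Set X, IsOpen U ∧ S = boxU U}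

/-- The cut `A^δ = (A^↑)^↓` w.r.t. the specialization order. -/
def cutD {X : Type} [TopologicalSpace X] (A : Set X) : Set X :=
  {x | ∀ u : X, (∀ a ∈ A, specLE a u) → specLE x u}

/-- `U` is SI₂-open. -/
def SI2Open {X : Type} [TopologicalSpace X] (U : Set X) : Prop :=
  IsOpen U ∧ ∀ F : Set X, IsIrreducible F → (cutD F ∩ U).Nonempty → (F ∩ U).Nonempty

/-- `le` makes `I` the index of a net: nonempty, reflexive, transitive, directed. -/
def IsNetOrder {I : Type} (le : I → I → Prop) : Prop :=
  Nonempty I ∧ (∀ i, le i i) ∧ (∀ i j k, le i j → le j k → le i k) ∧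
    (∀ i j, ∃ k, le i k ∧ le j k)

/-- GSI₂-convergence of the net `xi` (indexed by `(I, le)`) to `x`. -/
def GSI2Conv {X : Type} [TopologicalSpace X] {I : Type} (le : I → I → Prop)
    (xi : I → X) (x : X) : Prop :=
  ∃ 𝒢 : Set (Set X), (∀ G ∈ 𝒢, G.Finite ∧ G.Nonempty) ∧
    IsIrreducible {K : SmythPS X | ∃ G ∈ 𝒢, K.1 = upClosure G} ∧
    (∀ U : Set X, IsOpen U → (∃ G ∈ 𝒢, upClosure G ⊆ U) →
      ∃ i₀, ∀ i, le i₀ i → xi i ∈ U) ∧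
    (⋂ G ∈ 𝒢, upClosure G) ⊆ upClosure {x}

/-- `A ≪_{I₂} B`. -/
def WayBelowI2 {X : Type} [TopologicalSpace X] (A B : Set X) : Prop :=
  ∀ D : Set X, IsIrreducible D → (cutD D ∩ B).Nonempty → (A ∩ closure D).Nonempty

/-- `w(x) = {↑F : F nonempty finite, F ≪_{I₂} x}` as a subset of the Smyth power space. -/
def wPS {X : Type} [TopologicalSpace X] (x : X) : Set (SmythPS X) :=
  {K : SmythPS X | ∃ F : Set X, F.Finite ∧ F.Nonempty ∧ WayBelowI2 F {x} ∧ K.1 = upClosure F}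

/-- QI₂-continuity. -/
def QI2Continuous (X : Type) [TopologicalSpace X] : Prop :=
  ∀ x : X, IsIrreducible (wPS x) ∧ upClosure {x} = ⋂ K ∈ wPS x, (K.1 : Set X)

/-- Strong QI₂-continuity. -/
def StronglyQI2Continuous (X : Type) [TopologicalSpace X] : Prop :=
  QI2Continuous X ∧
  ∀ (F : Set X) (x : X) (U : Set X), F.Finite → F.Nonempty → WayBelowI2 F {x} →
    IsOpen U → F ⊆ U → ∃ W : Set X, SI2Open W ∧ x ∈ W ∧ W ⊆ U

open Topology


/-!
Forward direction: if a net GSI₂-converges to `x ∈ U` via `𝒢` but no `↑G` lies inside the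
SI₂-open set `U`, the topological Rudin lemma yields an irreducible closed `B ⊆ Uᶜ` meeting
every `↑G`. Every upper bound of `B` then lies in `⋂ ↑G ⊆ ↑x`, so `x ∈ B^δ ∩ U`, and SI₂-openness
forces `B ∩ U ≠ ∅`, a contradiction.

Converse: for irreducible `F` with `x ∈ F^δ` and `F ⊆ cl S`, the net of points of `S` indexed by
the open sets meeting `F` GSI₂-converges to `x` through `𝒢 = {{a} : a ∈ F}`, so `S` meets every
GSI₂-open set containing `x`. Taking `F = {x}`, `S = Uᶜ` gives openness, and `S = F` gives the
irreducible-set condition.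
-/

section Specialization

variable {X : Type} [TopologicalSpace X]

lemma specLE_iff_specializes {x y : X} : specLE x y ↔ y ⤳ x :=
  specializes_iff_mem_closure.symm

lemma mem_upClosure_singleton {a y : X} : y ∈ upClosure {a} ↔ specLE a y := by
  simp [upClosure]

lemma upClosure_eq_nhdsKer (A : Set X) : upClosure A = nhdsKer A := by
  ext y
  simp [upClosure, mem_nhdsKer_iff_specializes, specLE_iff_specializes]

lemma mem_upClosure_of_specLE {A : Set X} {a y : X} (ha : a ∈ upClosure A) (h : specLE a y) :
    y ∈ upClosure A := by
  obtain ⟨b, hb, hba⟩ := ha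
  exact ⟨b, hb, specLE_iff_specializes.2 ((specLE_iff_specializes.1 h).trans
    (specLE_iff_specializes.1 hba))⟩

lemma IsOpen.upClosure_subset {U A : Set X} (hU : IsOpen U) : upClosure A ⊆ U ↔ A ⊆ U := by
  rw [upClosure_eq_nhdsKer, hU.nhdsKer_subset]

lemma Set.Finite.isCompact_upClosure {G : Set X} (hG : G.Finite) : IsCompact (upClosure G) := by
  rw [upClosure_eq_nhdsKer]
  exact hG.isCompact.nhdsKer

end Specialization

namespace SmythPS

variable {X : Type} [TopologicalSpace X]

def ofFinite (G : Set X) (hG : G.Finite) (hne : G.Nonempty) : SmythPS X :=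
  ⟨upClosure G, hne.mono fun a ha => ⟨a, ha, specLE_iff_specializes.2 le_rfl⟩,
    hG.isCompact_upClosure, fun _ ha _ => mem_upClosure_of_specLE ha⟩

def pure (x : X) : SmythPS X :=
  ofFinite {x} (finite_singleton x) (singleton_nonempty x)

lemma isOpen_boxU {U : Set X} (hU : IsOpen U) : IsOpen (boxU U) :=
  TopologicalSpace.GenerateOpen.basic _ ⟨U, hU, rfl⟩

lemma continuous_pure : Continuous (pure : X → SmythPS X) := by
  refine continuous_generateFrom_iff.2 ?_
  rintro _ ⟨U, hU, rfl⟩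
  have hpre : pure ⁻¹' boxU U = U := by
    ext x
    exact (hU.upClosure_subset (A := {x})).trans singleton_subset_iff
  rwa [hpre]

end SmythPS

section Rudin

variable {X : Type} [TopologicalSpace X]

lemma IsCompact.inter_sInter_nonempty_of_isChain {K : Set X} (hK : IsCompact K)
    {c : Set (Set X)} (hc : IsChain (· ⊆ ·) c) (hcne : c.Nonempty)
    (hclosed : ∀ B ∈ c, IsClosed B) (hmeet : ∀ B ∈ c, (K ∩ B).Nonempty) :
    (K ∩ ⋂₀ c).Nonempty := by
  have : Nonempty c := hcne.to_subtype
  by_contra! hempty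
  rw [sInter_eq_iInter] at hempty
  obtain ⟨⟨B, hB⟩, hKB⟩ := hK.elim_directed_family_closed (fun B : c => B.1)
    (fun B => hclosed B B.2) hempty fun B C =>
      (hc.total B.2 C.2).elim (fun h => ⟨B, subset_rfl, h⟩) fun h => ⟨C, h, subset_rfl⟩
  exact (hmeet B hB).ne_empty hKB

/-- If `m ⊆ z₁ ∪ z₂` with `m ⊈ z₁, z₂`, minimality gives members of `𝒦` in the open boxes
`□(m ∩ z₁)ᶜ` and `□(m ∩ z₂)ᶜ`; irreducibility puts one in both, and it misses `m`. -/
lemma isPreirreducible_of_minimal_closed_inter_nonempty {𝒦 : Set (SmythPS X)}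
    (h𝒦 : IsPreirreducible 𝒦) {m : Set X}
    (hm : Minimal (fun B => IsClosed B ∧ ∀ K ∈ 𝒦, (K.1 ∩ B).Nonempty) m) :
    IsPreirreducible m := by
  rw [isPreirreducible_iff_isClosed_union_isClosed]
  intro z₁ z₂ hz₁ hz₂ hm_sub
  have avoid : ∀ z, IsClosed z → ¬ m ⊆ z → (𝒦 ∩ boxU (m ∩ z)ᶜ).Nonempty := by
    intro z hz hmz
    by_contra! hnone
    refine hmz ((hm.le_of_le ⟨hm.prop.1.inter hz, fun K hK => ?_⟩ inter_subset_left).trans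
      inter_subset_right)
    by_contra hK_empty
    exact (eq_empty_iff_forall_notMem.1 hnone) K ⟨hK, fun y hy hym =>
      hK_empty ⟨y, hy, hym⟩⟩
  by_contra! hsplit
  obtain ⟨K, hK, hK₁, hK₂⟩ := h𝒦 _ _ (SmythPS.isOpen_boxU (hm.prop.1.inter hz₁).isOpen_compl)
    (SmythPS.isOpen_boxU (hm.prop.1.inter hz₂).isOpen_compl)
    (avoid z₁ hz₁ hsplit.1) (avoid z₂ hz₂ hsplit.2)
  obtain ⟨y, hyK, hym⟩ := hm.prop.2 K hK
  rcases hm_sub hym with hy | hy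
  exacts [hK₁ hyK ⟨hym, hy⟩, hK₂ hyK ⟨hym, hy⟩]

theorem topological_rudin {𝒦 : Set (SmythPS X)} (h𝒦 : IsIrreducible 𝒦) {A : Set X}
    (hA : IsClosed A) (hmeet : ∀ K ∈ 𝒦, (K.1 ∩ A).Nonempty) :
    ∃ B ⊆ A, IsIrreducible B ∧ ∀ K ∈ 𝒦, (K.1 ∩ B).Nonempty := by
  obtain ⟨m, hmA, hm⟩ := zorn_superset_nonempty
    {B : Set X | IsClosed B ∧ ∀ K ∈ 𝒦, (K.1 ∩ B).Nonempty}
    (fun c hcS hc hcne => ⟨⋂₀ c,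
      ⟨isClosed_sInter fun B hB => (hcS hB).1, fun K hK =>
        K.2.2.1.inter_sInter_nonempty_of_isChain hc hcne (fun B hB => (hcS hB).1)
          fun B hB => (hcS hB).2 K hK⟩,
      fun _ => sInter_subset_of_mem⟩)
    A ⟨hA, hmeet⟩
  obtain ⟨K, hK⟩ := h𝒦.nonempty
  exact ⟨m, hmA, ⟨(hm.prop.2 K hK).mono inter_subset_right,
    isPreirreducible_of_minimal_closed_inter_nonempty h𝒦.isPreirreducible hm⟩, hm.prop.2⟩

end Rudin

section Convergence

variable {X : Type} [TopologicalSpace X]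

def IsGSI2Open (U : Set X) : Prop :=
  ∀ (I : Type) (le : I → I → Prop) (xi : I → X) (x : X), IsNetOrder le →
    GSI2Conv le xi x → x ∈ U → ∃ i₀, ∀ i, le i₀ i → xi i ∈ U

lemma mem_cutD_of_inter_upClosure_nonempty {𝒢 : Set (Set X)} {B : Set X} {x : X}
    (hB : ∀ G ∈ 𝒢, (upClosure G ∩ B).Nonempty) (h𝒢 : ⋂ G ∈ 𝒢, upClosure G ⊆ upClosure {x}) :
    x ∈ cutD B := by
  intro u hu
  refine mem_upClosure_singleton.1 (h𝒢 (mem_iInter₂.2 fun G hG => ?_))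
  obtain ⟨y, hyG, hyB⟩ := hB G hG
  exact mem_upClosure_of_specLE hyG (hu y hyB)

theorem SI2Open.exists_forall_mem_of_gsi2Conv {U : Set X} (hU : SI2Open U) {I : Type}
    {le : I → I → Prop} {xi : I → X} {x : X} (hconv : GSI2Conv le xi x) (hx : x ∈ U) :
    ∃ i₀, ∀ i, le i₀ i → xi i ∈ U := by
  obtain ⟨𝒢, h𝒢fin, h𝒢irr, h𝒢conv, h𝒢int⟩ := hconv
  refine h𝒢conv U hU.1 ?_
  by_contra! hout
  obtain ⟨B, hBU, hBirr, hBmeet⟩ := topological_rudin h𝒢irr hU.1.isClosed_compl (by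
    rintro K ⟨G, hG, hK⟩
    rw [hK]
    exact not_subset_iff_exists_mem_notMem.1 (hout G hG))
  have hxB : x ∈ cutD B := mem_cutD_of_inter_upClosure_nonempty
    (fun G hG => hBmeet (SmythPS.ofFinite G (h𝒢fin G hG).1 (h𝒢fin G hG).2) ⟨G, hG, rfl⟩) h𝒢int
  obtain ⟨y, hyB, hyU⟩ := hU.2 B hBirr ⟨x, hxB, hx⟩
  exact hBU hyB hyU

lemma IsIrreducible.isNetOrder_openMeeting {F : Set X} (hF : IsIrreducible F) :
    IsNetOrder fun V W : {V : Set X // IsOpen V ∧ (F ∩ V).Nonempty} => W.1 ⊆ V.1 :=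
  ⟨⟨⟨univ, isOpen_univ, by simpa using hF.nonempty⟩⟩, fun _ => subset_rfl,
    fun _ _ _ hij hjk => hjk.trans hij,
    fun V W => ⟨⟨V.1 ∩ W.1, V.2.1.inter W.2.1, hF.2 V.1 W.1 V.2.1 W.2.1 V.2.2 W.2.2⟩,
      inter_subset_left, inter_subset_right⟩⟩

/-- Witnessed by `𝒢 = {{a} : a ∈ F}`, whose Smyth-space image `pure '' F` is irreducible. -/
lemma IsIrreducible.gsi2Conv {F : Set X} (hF : IsIrreducible F) {x : X} (hx : x ∈ cutD F)
    {I : Type} {le : I → I → Prop} {xi : I → X}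
    (h : ∀ W, IsOpen W → (F ∩ W).Nonempty → ∃ i₀, ∀ i, le i₀ i → xi i ∈ W) :
    GSI2Conv le xi x := by
  refine ⟨(fun a => ({a} : Set X)) '' F, ?_, ?_, ?_, ?_⟩
  · rintro _ ⟨a, -, rfl⟩
    exact ⟨finite_singleton a, singleton_nonempty a⟩
  · have himage : {K : SmythPS X | ∃ G ∈ (fun a => ({a} : Set X)) '' F, K.1 = upClosure G} =
        SmythPS.pure '' F := by
      ext K
      constructor
      · rintro ⟨_, ⟨a, ha, rfl⟩, hK⟩
        exact ⟨a, ha, (Subtype.ext hK).symm⟩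
      · rintro ⟨a, ha, rfl⟩
        exact ⟨{a}, ⟨a, ha, rfl⟩, rfl⟩
    rw [himage]
    exact hF.image _ SmythPS.continuous_pure.continuousOn
  · rintro W hW ⟨_, ⟨a, ha, rfl⟩, haW⟩
    exact h W hW ⟨a, ha, hW.upClosure_subset.1 haW rfl⟩
  · refine fun u hu => mem_upClosure_singleton.2 (hx u fun a ha => ?_)
    exact mem_upClosure_singleton.1 (mem_iInter₂.1 hu {a} ⟨a, ha, rfl⟩)

/-- The points of `S` chosen in the open sets meeting `F` form a net GSI₂-converging to `x`. -/
lemma IsGSI2Open.inter_nonempty {U : Set X} (hU : IsGSI2Open U) {F S : Set X}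
    (hF : IsIrreducible F) (hFS : F ⊆ closure S) {x : X} (hx : x ∈ cutD F) (hxU : x ∈ U) :
    (S ∩ U).Nonempty := by
  have hS : ∀ V : {V : Set X // IsOpen V ∧ (F ∩ V).Nonempty}, (V.1 ∩ S).Nonempty := by
    rintro ⟨V, hV, y, hyF, hyV⟩
    exact mem_closure_iff.1 (hFS hyF) V hV hyV
  choose xi hxi using hS
  obtain ⟨i₀, hi₀⟩ := hU _ _ xi x hF.isNetOrder_openMeeting
    (hF.gsi2Conv hx fun W hW hFW => ⟨⟨W, hW, hFW⟩, fun V hV => hV (hxi V).1⟩) hxU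
  exact ⟨xi i₀, (hxi i₀).2, hi₀ i₀ subset_rfl⟩

theorem IsGSI2Open.si2Open {U : Set X} (hU : IsGSI2Open U) : SI2Open U := by
  refine ⟨subset_interior_iff_isOpen.1 fun x hxU => ?_,
    fun F hF ⟨x, hxF, hxU⟩ => hU.inter_nonempty hF subset_closure hxF hxU⟩
  by_contra hx
  have hx_cl : ({x} : Set X) ⊆ closure Uᶜ := by
    rwa [closure_compl, singleton_subset_iff]
  obtain ⟨y, hyUc, hyU⟩ := hU.inter_nonempty isIrreducible_singleton hx_cl
    (fun u hu => hu x rfl) hxU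
  exact hyUc hyU

end Convergence

theorem stmt13_general {X : Type} [TopologicalSpace X] (U : Set X) :
    SI2Open U ↔
      ∀ (I : Type) (le : I → I → Prop) (xi : I → X) (x : X), IsNetOrder le →
        GSI2Conv le xi x → x ∈ U → ∃ i₀, ∀ i, le i₀ i → xi i ∈ U :=
  ⟨fun hU _ _ _ _ _ hconv hx => hU.exists_forall_mem_of_gsi2Conv hconv hx,
    IsGSI2Open.si2Open⟩

theorem stmt13 {X : Type} [TopologicalSpace X] [T0Space X] (U : Set X) :
    SI2Open U ↔
      ∀ (I : Type) (le : I → I → Prop) (xi : I → X) (x : X), IsNetOrder le →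
        GSI2Conv le xi x → x ∈ U → ∃ i₀, ∀ i, le i₀ i → xi i ∈ U :=
  stmt13_general U
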